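/- Implementability of the cutoff allocation under weak monotonicity, with binding adjacent constraints: Suppose the instance is weakly monotone with respect to cutoffs i^1, …, i^d ∈ {1,…,n}. Define q_i^k := 1 if i ≥ i^k and 0 otherwise, t_i := Σ_{k : i^k ≤ i} θ_{i^k}^k for i ∈ {1,…,n}, and (q_0,t_0) := (0,0). Then (q,t) is IC-IR, and every adjacent downward incentive constraint binds: ⟨q_i, θ_i⟩ − t_i = ⟨q_{i−1}, θ_i⟩ − t_{i−1} for all i ∈ {1,…,n}. -/

import Mathlib

open Finset

noncomputable section

/-! Common setup: a multiproduct monopoly with `d` goods (indexed `1,…,d`) and `n` buyer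
types (indexed `1,…,n`, with `0` the outside option).  All vectors over goods/types are
encoded as functions `ℕ → ℝ`. -/

/-- Inner product `⟨x, y⟩ = ∑_{k=1}^d x_k y_k` over the goods `1,…,d`. -/
def dot (d : ℕ) (x y : ℕ → ℝ) : ℝ := ∑ k ∈ Finset.Icc 1 d, x k * y k

/-- `f` is a probability vector on types `1,…,n`. -/
def IsProb (n : ℕ) (f : ℕ → ℝ) : Prop :=
  (∀ i ∈ Finset.Icc 1 n, 0 < f i) ∧ ∑ i ∈ Finset.Icc 1 n, f i = 1

/-- Cumulative distribution `F_i = ∑_{j=1}^i f_j` (so `F_0 = 0`). -/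
def Fc (f : ℕ → ℝ) (i : ℕ) : ℝ := ∑ j ∈ Finset.Icc 1 i, f j

/-- `(q,t)` is a mechanism: `(q_0,t_0) = (0,0)` and `q_i ∈ [0,1]^d` for `i ∈ {1,…,n}`. -/
def IsMechanism (d n : ℕ) (q : ℕ → ℕ → ℝ) (t : ℕ → ℝ) : Prop :=
  (∀ k ∈ Finset.Icc 1 d, q 0 k = 0) ∧ t 0 = 0 ∧
    ∀ i ∈ Finset.Icc 1 n, ∀ k ∈ Finset.Icc 1 d, 0 ≤ q i k ∧ q i k ≤ 1

/-- Incentive compatibility and individual rationality: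
`⟨q_j, θ_j⟩ − t_j ≥ ⟨q_i, θ_j⟩ − t_i` for all `j ∈ {1,…,n}`, `i ∈ {0,…,n}`. -/
def ICIR (d n : ℕ) (θ : ℕ → ℕ → ℝ) (q : ℕ → ℕ → ℝ) (t : ℕ → ℝ) : Prop :=
  ∀ j ∈ Finset.Icc 1 n, ∀ i ∈ Finset.Icc 0 n,
    dot d (q j) (θ j) - t j ≥ dot d (q i) (θ j) - t i

/-- Expected revenue `∑_{i=1}^n f_i t_i`. -/
def revenue (n : ℕ) (f t : ℕ → ℝ) : ℝ := ∑ i ∈ Finset.Icc 1 n, f i * t i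

/-- A mechanism is optimal if it is an IC-IR mechanism whose revenue is at least that of
every IC-IR mechanism. -/
def Optimal (d n : ℕ) (θ : ℕ → ℕ → ℝ) (f : ℕ → ℝ) (q : ℕ → ℕ → ℝ) (t : ℕ → ℝ) : Prop :=
  IsMechanism d n q t ∧ ICIR d n θ q t ∧
    ∀ q' : ℕ → ℕ → ℝ, ∀ t' : ℕ → ℝ, IsMechanism d n q' t' → ICIR d n θ q' t' →
      revenue n f t' ≤ revenue n f t

/-- Upgrade pricing: `{q_0, q_1, …, q_n}` is totally ordered in the componentwise order. -/
def UpgradePricing (d n : ℕ) (q : ℕ → ℕ → ℝ) : Prop :=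
  ∀ i ∈ Finset.Icc 0 n, ∀ j ∈ Finset.Icc 0 n,
    (∀ k ∈ Finset.Icc 1 d, q i k ≤ q j k) ∨ (∀ k ∈ Finset.Icc 1 d, q j k ≤ q i k)

/-- `k`-th coordinate of the virtual value of type `i` under multipliers `lam`:
`φ_i^λ = θ_i − (1/f_i) ∑_{j=1}^n λ_{ji} (θ_j − θ_i)`. -/
def virt (n : ℕ) (θ : ℕ → ℕ → ℝ) (f : ℕ → ℝ) (lam : ℕ → ℕ → ℝ) (i k : ℕ) : ℝ :=
  θ i k - (1 / f i) * ∑ j ∈ Finset.Icc 1 n, lam j i * (θ j k - θ i k)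

/-- Nonnegativity of the multipliers `λ_{ji}`, `j ∈ {1,…,n}`, `i ∈ {0,…,n}`. -/
def NonnegLam (n : ℕ) (lam : ℕ → ℕ → ℝ) : Prop :=
  ∀ j ∈ Finset.Icc 1 n, ∀ i ∈ Finset.Icc 0 n, 0 ≤ lam j i

/-- Flow conservation: `f_i = ∑_{j=0}^n λ_{ij} − ∑_{j=1}^n λ_{ji}` for all `i ∈ {1,…,n}`. -/
def FlowConservation (n : ℕ) (f : ℕ → ℝ) (lam : ℕ → ℕ → ℝ) : Prop :=
  ∀ i ∈ Finset.Icc 1 n,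
    f i = ∑ j ∈ Finset.Icc 0 n, lam i j - ∑ j ∈ Finset.Icc 1 n, lam j i

/-- A flow is downward if `λ_{ji} > 0` with `j, i ∈ {1,…,n}` implies `j > i`. -/
def Downward (n : ℕ) (lam : ℕ → ℕ → ℝ) : Prop :=
  ∀ j ∈ Finset.Icc 1 n, ∀ i ∈ Finset.Icc 1 n, 0 < lam j i → i < j

/-- `q'` is a feasible allocation: `q'_i ∈ [0,1]^d` for `i ∈ {1,…,n}`. -/
def InUnitCube (d n : ℕ) (q : ℕ → ℕ → ℝ) : Prop :=
  ∀ i ∈ Finset.Icc 1 n, ∀ k ∈ Finset.Icc 1 d, 0 ≤ q i k ∧ q i k ≤ 1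

/-- Virtual welfare `∑_{i=1}^n f_i ⟨q_i, φ_i⟩` of an allocation `q` for virtual values `phi`. -/
def vw (d n : ℕ) (f : ℕ → ℝ) (phi : ℕ → ℕ → ℝ) (q : ℕ → ℕ → ℝ) : ℝ :=
  ∑ i ∈ Finset.Icc 1 n, f i * ∑ k ∈ Finset.Icc 1 d, q i k * phi i k

/-- Initial (Myersonian) virtual values: `φ_i = θ_i − ((1 − F_i)/f_i)(θ_{i+1} − θ_i)` for
`i < n`, and `φ_n = θ_n`. -/
def initVirt (n : ℕ) (θ : ℕ → ℕ → ℝ) (f : ℕ → ℝ) (i k : ℕ) : ℝ :=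
  if i < n then θ i k - ((1 - Fc f i) / f i) * (θ (i + 1) k - θ i k) else θ i k

/-- Pseudo-revenues `R_i^k = (1 − F_{i−1}) θ_i^k` for `i ∈ {1,…,n}`, with `R_{n+1}^k = 0`. -/
def pseudoRev (n : ℕ) (θ : ℕ → ℕ → ℝ) (f : ℕ → ℝ) (i k : ℕ) : ℝ :=
  if i ≤ n then (1 - Fc f (i - 1)) * θ i k else 0

/-- The cutoff allocation: `q_i^k = 1` iff `i ≥ i^k`. -/
def cutAlloc (cut : ℕ → ℕ) : ℕ → ℕ → ℝ := fun i k => if cut k ≤ i then 1 else 0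

/-- The instance is weakly monotone w.r.t. cutoffs `cut`:
`θ_i^k ≤ θ_j^k` whenever `i ≤ i^k ≤ j`. -/
def WeaklyMonotone (d n : ℕ) (θ : ℕ → ℕ → ℝ) (cut : ℕ → ℕ) : Prop :=
  ∀ k ∈ Finset.Icc 1 d, ∀ i ∈ Finset.Icc 1 n, ∀ j ∈ Finset.Icc 1 n,
    i ≤ cut k → cut k ≤ j → θ i k ≤ θ j k

/-- The instance is regular w.r.t. cutoffs `cut`:
`φ_i^k ≤ 0 ≤ φ_j^k` whenever `i ≤ i^k ≤ j`. -/
def Regular (d n : ℕ) (θ : ℕ → ℕ → ℝ) (f : ℕ → ℝ) (cut : ℕ → ℕ) : Prop :=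
  ∀ k ∈ Finset.Icc 1 d, ∀ i ∈ Finset.Icc 1 n, ∀ j ∈ Finset.Icc 1 n,
    i ≤ cut k → cut k ≤ j → initVirt n θ f i k ≤ 0 ∧ 0 ≤ initVirt n θ f j k

/-- Monotone types: `θ_i^k ≤ θ_j^k` for all `i ≤ j` and all goods `k`. -/
def MonotoneTypes (d n : ℕ) (θ : ℕ → ℕ → ℝ) : Prop :=
  ∀ i ∈ Finset.Icc 1 n, ∀ j ∈ Finset.Icc 1 n, i ≤ j → ∀ k ∈ Finset.Icc 1 d, θ i k ≤ θ j k

/-- Monotone marginal rates of substitution: all values are positive and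
`θ_i^l / θ_i^k ≤ θ_j^l / θ_j^k` whenever `i ≤ j` and `k ≤ l`. -/
def MonotoneMRS (d n : ℕ) (θ : ℕ → ℕ → ℝ) : Prop :=
  (∀ i ∈ Finset.Icc 1 n, ∀ k ∈ Finset.Icc 1 d, 0 < θ i k) ∧
    ∀ i ∈ Finset.Icc 1 n, ∀ j ∈ Finset.Icc 1 n, i ≤ j →
      ∀ k ∈ Finset.Icc 1 d, ∀ l ∈ Finset.Icc 1 d, k ≤ l →
        θ i l / θ i k ≤ θ j l / θ j k

/-- The initial flow `λ̂_{ji} = 1 − F_i` if `j = i + 1`, and `0` otherwise. -/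
def lamHat (f : ℕ → ℝ) : ℕ → ℕ → ℝ := fun j i => if j = i + 1 then 1 - Fc f i else 0

/-- Extended cutoffs: `i^0 = 1` and `i^{d+1} = n`. -/
def extCut (n d : ℕ) (cut : ℕ → ℕ) (k : ℕ) : ℕ :=
  if k = 0 then 1 else if k ≤ d then cut k else n

/-- The ironing update `λ'(γ)` of `lam` at type `i`:
`λ'_{ji} = γ λ_{ji}` and `λ'_{j(i−1)} = λ_{j(i−1)} + (1−γ) λ_{ji}` for `j > i`;
`λ'_{i(i−1)} = λ_{i(i−1)} − (1−γ) ∑_{j=i+1}^n λ_{ji}`; other entries unchanged. -/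
def ironUpdate (n : ℕ) (lam : ℕ → ℕ → ℝ) (i : ℕ) (γ : ℝ) : ℕ → ℕ → ℝ :=
  fun j r =>
    if i < j ∧ r = i then γ * lam j i
    else if i < j ∧ r = i - 1 then lam j (i - 1) + (1 - γ) * lam j i
    else if j = i ∧ r = i - 1 then
      lam i (i - 1) - (1 - γ) * ∑ j' ∈ Finset.Icc (i + 1) n, lam j' i
    else lam j r

/-- Pseudo-revenue associated to a flow: `R_i^{λ,k} = ∑_{j=i}^n f_j φ_j^{λ,k}`
(so `R_{n+1}^{λ,k} = 0`). -/
def flowRev (n : ℕ) (θ : ℕ → ℕ → ℝ) (f : ℕ → ℝ) (lam : ℕ → ℕ → ℝ) (i k : ℕ) : ℝ :=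
  ∑ j ∈ Finset.Icc i n, f j * virt n θ f lam j k

/-- A finite sequence `(R_i)_{i=1}^n` is quasi-concave: for some `i' ∈ {1,…,n}`,
`R_i ≥ R_j` whenever `i' ≤ i ≤ j` or `j ≤ i ≤ i'` (indices in `{1,…,n}`). -/
def QuasiConcaveSeq (n : ℕ) (R : ℕ → ℝ) : Prop :=
  ∃ i' ∈ Finset.Icc 1 n, ∀ i ∈ Finset.Icc 1 n, ∀ j ∈ Finset.Icc 1 n,
    ((i' ≤ i ∧ i ≤ j) ∨ (j ≤ i ∧ i ≤ i')) → R j ≤ R i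

/-- `Rbar` is the quasi-concave closure of `R` on `{1,…,n}`: the pointwise smallest
quasi-concave sequence dominating `R`. -/
def IsQCClosure (n : ℕ) (R Rbar : ℕ → ℝ) : Prop :=
  QuasiConcaveSeq n Rbar ∧ (∀ i ∈ Finset.Icc 1 n, R i ≤ Rbar i) ∧
    ∀ S : ℕ → ℝ, QuasiConcaveSeq n S → (∀ i ∈ Finset.Icc 1 n, R i ≤ S i) →
      ∀ i ∈ Finset.Icc 1 n, Rbar i ≤ S i

/-- `{a,…,b}` is a candidate ironing interval for the sequence `R` with closure `Rbar`:
an inclusion-maximal contiguous set of indices where `Rbar ≠ R`. -/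
def CandInterval (n : ℕ) (R Rbar : ℕ → ℝ) (a b : ℕ) : Prop :=
  1 ≤ a ∧ a ≤ b ∧ b ≤ n ∧ (∀ i, a ≤ i → i ≤ b → Rbar i ≠ R i) ∧
    (a = 1 ∨ Rbar (a - 1) = R (a - 1)) ∧ (b = n ∨ Rbar (b + 1) = R (b + 1))

/-- The instance is mostly regular w.r.t. cutoffs `cut`, where `Rbar · k` is the
quasi-concave closure of the pseudo-revenues of item `k`:
(1) no partial overlap of candidate ironing intervals of neighboring items;
(2) no candidate ironing interval contains a neighboring cutoff;
(3) not-too-shuffled values on candidate ironing intervals between cutoffs. -/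
def MostlyRegular (d n : ℕ) (θ : ℕ → ℕ → ℝ) (f : ℕ → ℝ) (cut : ℕ → ℕ)
    (Rbar : ℕ → ℕ → ℝ) : Prop :=
  ∀ k, 1 ≤ k → k + 1 ≤ d →
    (∀ a b c e,
      CandInterval n (fun i => pseudoRev n θ f i k) (fun i => Rbar i k) a b →
      CandInterval n (fun i => pseudoRev n θ f i (k + 1)) (fun i => Rbar i (k + 1)) c e →
      (b + 1 < c ∨ e + 1 < a ∨ (c < a ∧ b < e) ∨ (a < c ∧ e < b))) ∧
    (∀ a b,
      (CandInterval n (fun i => pseudoRev n θ f i k) (fun i => Rbar i k) a b ∨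
        CandInterval n (fun i => pseudoRev n θ f i (k + 1)) (fun i => Rbar i (k + 1)) a b) →
      ¬(a ≤ cut k ∧ cut k ≤ b) ∧ ¬(a ≤ cut (k + 1) ∧ cut (k + 1) ≤ b)) ∧
    (∀ a b,
      (CandInterval n (fun i => pseudoRev n θ f i k) (fun i => Rbar i k) a b ∨
        CandInterval n (fun i => pseudoRev n θ f i (k + 1)) (fun i => Rbar i (k + 1)) a b) →
      cut k + 1 ≤ a → b + 1 ≤ cut (k + 1) →
      ∀ i, a ≤ i → i ≤ b → θ a (k + 1) ≤ θ i (k + 1) ∧ θ b k ≤ θ (b + 1) k)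

/-- Allocation of the separate pricing mechanism at prices `p`:
`q_i^k = 1` iff `θ_i^k ≥ p_k` (and `q_0 = 0`). -/
def sepQ (θ : ℕ → ℕ → ℝ) (p : ℕ → ℝ) : ℕ → ℕ → ℝ :=
  fun i k => if i = 0 then 0 else if p k ≤ θ i k then 1 else 0

/-- Transfers of the separate pricing mechanism at prices `p`: `t_i = ∑_{k=1}^d p_k q_i^k`. -/
def sepT (d : ℕ) (θ : ℕ → ℕ → ℝ) (p : ℕ → ℝ) : ℕ → ℝ :=
  fun i => ∑ k ∈ Finset.Icc 1 d, p k * sepQ θ p i k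

/-! Reporting type `i`, type `j` gets the goods `k` with `i^k ≤ i`, each at the price
`θ_{i^k}^k`, so its utility is `∑_{k : i^k ≤ i} (θ_j^k − θ_{i^k}^k)`. By weak monotonicity the
summand of good `k` is nonnegative when `i^k ≤ j` and nonpositive otherwise, so the truthful
report `i = j` maximizes the utility good by good. Passing from report `i − 1` to report `i` adds only the
goods with `i^k = i`, whose summand vanishes for type `i`. -/

def cutTransfer (d : ℕ) (θ : ℕ → ℕ → ℝ) (cut : ℕ → ℕ) (i : ℕ) : ℝ :=
  ∑ k ∈ Icc 1 d, if cut k ≤ i then θ (cut k) k else 0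

section CutoffMechanism

variable {d n : ℕ} {θ : ℕ → ℕ → ℝ} {cut : ℕ → ℕ}

theorem dot_cutAlloc_sub_cutTransfer (i j : ℕ) :
    dot d (cutAlloc cut i) (θ j) - cutTransfer d θ cut i =
      ∑ k ∈ Icc 1 d, if cut k ≤ i then θ j k - θ (cut k) k else 0 := by
  rw [dot, cutTransfer, ← sum_sub_distrib]
  refine sum_congr rfl fun k _ => ?_
  by_cases h : cut k ≤ i <;> simp [cutAlloc, h]

theorem isMechanism_cutAlloc (hcut : ∀ k ∈ Icc 1 d, 1 ≤ cut k) :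
    IsMechanism d n (cutAlloc cut) (cutTransfer d θ cut) := by
  refine ⟨fun k hk => ?_, sum_eq_zero fun k hk => ?_, fun i _ k _ => ?_⟩
  · simp [cutAlloc, Nat.one_le_iff_ne_zero.mp (hcut k hk)]
  · simp [Nat.one_le_iff_ne_zero.mp (hcut k hk)]
  · by_cases h : cut k ≤ i <;> simp [cutAlloc, h]

theorem icir_cutAlloc (hcut : ∀ k ∈ Icc 1 d, cut k ∈ Icc 1 n)
    (hwm : WeaklyMonotone d n θ cut) :
    ICIR d n θ (cutAlloc cut) (cutTransfer d θ cut) := by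
  intro j hj i _
  rw [ge_iff_le, dot_cutAlloc_sub_cutTransfer, dot_cutAlloc_sub_cutTransfer]
  refine sum_le_sum fun k hk => ?_
  split_ifs with hi hj' hj'
  · exact le_rfl
  · have : θ j k ≤ θ (cut k) k := hwm k hk j hj (cut k) (hcut k hk) (by omega) le_rfl
    linarith
  · have : θ (cut k) k ≤ θ j k := hwm k hk (cut k) (hcut k hk) j hj le_rfl hj'
    linarith
  · exact le_rfl

theorem dot_cutAlloc_sub_cutTransfer_pred (i : ℕ) :
    dot d (cutAlloc cut i) (θ i) - cutTransfer d θ cut i =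
      dot d (cutAlloc cut (i - 1)) (θ i) - cutTransfer d θ cut (i - 1) := by
  rw [dot_cutAlloc_sub_cutTransfer, dot_cutAlloc_sub_cutTransfer]
  refine sum_congr rfl fun k _ => ?_
  split_ifs with hi hi' hi'
  · rfl
  · rw [show cut k = i by omega, sub_self]
  · omega
  · rfl

end CutoffMechanism

theorem cutoff_implementable_general
    (d n : ℕ)
    (θ : ℕ → ℕ → ℝ)
    (cut : ℕ → ℕ) (hcut : ∀ k ∈ Finset.Icc 1 d, cut k ∈ Finset.Icc 1 n)
    (hwm : WeaklyMonotone d n θ cut) :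
    IsMechanism d n (cutAlloc cut)
        (fun i => ∑ k ∈ Finset.Icc 1 d, if cut k ≤ i then θ (cut k) k else 0) ∧
    ICIR d n θ (cutAlloc cut)
        (fun i => ∑ k ∈ Finset.Icc 1 d, if cut k ≤ i then θ (cut k) k else 0) ∧
    ∀ i ∈ Finset.Icc 1 n,
      dot d (cutAlloc cut i) (θ i) -
          (∑ k ∈ Finset.Icc 1 d, if cut k ≤ i then θ (cut k) k else 0) =
        dot d (cutAlloc cut (i - 1)) (θ i) -
          (∑ k ∈ Finset.Icc 1 d, if cut k ≤ i - 1 then θ (cut k) k else 0) :=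
  ⟨isMechanism_cutAlloc fun k hk => (mem_Icc.mp (hcut k hk)).1, icir_cutAlloc hcut hwm,
    fun i _ => dot_cutAlloc_sub_cutTransfer_pred i⟩

/-- **Implementability of the cutoff allocation under weak monotonicity**, with binding
adjacent downward incentive constraints, at the transfers `t_i = ∑_{k : i^k ≤ i} θ_{i^k}^k`. -/
theorem cutoff_implementable
    (d n : ℕ) (hd : 1 ≤ d) (hn : 1 ≤ n)
    (θ : ℕ → ℕ → ℝ) (hθ : ∀ i ∈ Finset.Icc 1 n, ∀ k ∈ Finset.Icc 1 d, 0 ≤ θ i k)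
    (f : ℕ → ℝ) (hf : IsProb n f)
    (cut : ℕ → ℕ) (hcut : ∀ k ∈ Finset.Icc 1 d, cut k ∈ Finset.Icc 1 n)
    (hwm : WeaklyMonotone d n θ cut) :
    IsMechanism d n (cutAlloc cut)
        (fun i => ∑ k ∈ Finset.Icc 1 d, if cut k ≤ i then θ (cut k) k else 0) ∧
    ICIR d n θ (cutAlloc cut)
        (fun i => ∑ k ∈ Finset.Icc 1 d, if cut k ≤ i then θ (cut k) k else 0) ∧
    ∀ i ∈ Finset.Icc 1 n,
      dot d (cutAlloc cut i) (θ i) -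
          (∑ k ∈ Finset.Icc 1 d, if cut k ≤ i then θ (cut k) k else 0) =
        dot d (cutAlloc cut (i - 1)) (θ i) -
          (∑ k ∈ Finset.Icc 1 d, if cut k ≤ i - 1 then θ (cut k) k else 0) :=
  cutoff_implementable_general d n θ cut hcut hwm
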